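/- For an abelian group G with torsion subgroup T, V(ℤT) ∩ V_n(ℤG) = V_n(ℤT) for all n ≥ 1, and consequently V(ℤT) ∩ V_ω(ℤG) = V_ω(ℤT). -/

import Mathlib

open MonoidAlgebra Pointwise

/-- The augmentation map `ℤG → ℤ`. -/
noncomputable def aug (G : Type*) [Group G] : MonoidAlgebra ℤ G →ₐ[ℤ] ℤ :=
  (MonoidAlgebra.lift ℤ ℤ G) 1

/-- The augmentation ideal `Δ(G)` of `ℤG`. -/
noncomputable def Δ (G : Type*) [Group G] : Ideal (MonoidAlgebra ℤ G) :=
  RingHom.ker (aug G).toRingHom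

lemma aug_of (G : Type*) [Group G] (g : G) : aug G (MonoidAlgebra.of ℤ G g) = 1 := by
  simp [aug]

lemma aug_single (G : Type*) [Group G] (g : G) :
    aug G (MonoidAlgebra.single g (1 : ℤ)) = 1 := by
  simp [aug]

lemma of_sub_one_mem (G : Type*) [Group G] (g : G) :
    MonoidAlgebra.of ℤ G g - 1 ∈ Δ G := by
  simp [Δ, RingHom.mem_ker, aug_single]

/-- The group `V(ℤG)` of normalized units. -/
noncomputable def V (G : Type*) [Group G] : Subgroup (MonoidAlgebra ℤ G)ˣ :=
  MonoidHom.ker (Units.map (aug G).toRingHom.toMonoidHom)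

/-- The subgroup `V_n(ℤG) = V(ℤG) ∩ (1 + Δⁿ(G))`. -/
noncomputable def Vn (G : Type*) [Group G] (n : ℕ) : Subgroup (MonoidAlgebra ℤ G)ˣ where
  carrier := {u | u ∈ V G ∧ (u : MonoidAlgebra ℤ G) - 1 ∈ Δ G ^ n}
  one_mem' := ⟨(V G).one_mem, by simp⟩
  mul_mem' := by
    rintro u v ⟨hu, hu'⟩ ⟨hv, hv'⟩
    refine ⟨(V G).mul_mem hu hv, ?_⟩
    have h : ((u * v : (MonoidAlgebra ℤ G)ˣ) : MonoidAlgebra ℤ G) - 1 =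
        ((u : MonoidAlgebra ℤ G) - 1) * ((v : MonoidAlgebra ℤ G) - 1) +
        ((u : MonoidAlgebra ℤ G) - 1) + ((v : MonoidAlgebra ℤ G) - 1) := by
      rw [Units.val_mul]; noncomm_ring
    rw [h]
    exact add_mem (add_mem (Ideal.mul_mem_left _ _ hv') hu') hv'
  inv_mem' := by
    rintro u ⟨hu, hu'⟩
    refine ⟨(V G).inv_mem hu, ?_⟩
    have h1 : ((u⁻¹ : (MonoidAlgebra ℤ G)ˣ) : MonoidAlgebra ℤ G) * (u : MonoidAlgebra ℤ G) = 1 :=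
      u.inv_mul
    have h : ((u⁻¹ : (MonoidAlgebra ℤ G)ˣ) : MonoidAlgebra ℤ G) - 1 =
        -(((u⁻¹ : (MonoidAlgebra ℤ G)ˣ) : MonoidAlgebra ℤ G) * ((u : MonoidAlgebra ℤ G) - 1)) := by
      rw [mul_sub, h1, mul_one]; noncomm_ring
    rw [h]
    exact neg_mem (Ideal.mul_mem_left _ _ hu')

/-- The `Δ`-adic residue `V_ω(ℤG) = ⋂_{n ≥ 1} V_n(ℤG)`. -/
noncomputable def Vω (G : Type*) [Group G] : Subgroup (MonoidAlgebra ℤ G)ˣ :=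
  ⨅ n : ℕ, Vn G (n + 1)


lemma aug_single'' (G : Type*) [Group G] (g : G) (c : ℤ) :
    aug G (MonoidAlgebra.single g c) = c := by
  simp [aug]

lemma aug_mapDomain {H K : Type*} [CommGroup H] [CommGroup K] (φ : H →* K) (x : MonoidAlgebra ℤ H) :
    aug K (MonoidAlgebra.mapDomainRingHom ℤ φ x) = aug H x := by
  induction x using MonoidAlgebra.induction_linear with
  | zero => simp
  | add f g hf hg => rw [map_add, map_add, map_add, hf, hg]
  | single g c =>
      show aug K (MonoidAlgebra.mapDomain φ (MonoidAlgebra.single g c)) = _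
      rw [MonoidAlgebra.mapDomain_single, aug_single'', aug_single'']

lemma mem_Δ_iff {H : Type*} [Group H] (x : MonoidAlgebra ℤ H) : x ∈ Δ H ↔ aug H x = 0 :=
  RingHom.mem_ker

lemma Δ_pow_map {H K : Type*} [CommGroup H] [CommGroup K] (φ : H →* K) {n : ℕ}
    {x : MonoidAlgebra ℤ H} (hx : x ∈ Δ H ^ n) :
    MonoidAlgebra.mapDomainRingHom ℤ φ x ∈ Δ K ^ n := by
  have h1 : Ideal.map (MonoidAlgebra.mapDomainRingHom ℤ φ) (Δ H) ≤ Δ K := by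
    rw [Ideal.map_le_iff_le_comap]
    intro a ha
    simp only [Ideal.mem_comap, mem_Δ_iff, aug_mapDomain]
    exact (mem_Δ_iff a).1 ha
  have h2 := Ideal.mem_map_of_mem (MonoidAlgebra.mapDomainRingHom ℤ φ) hx
  rw [Ideal.map_pow (mapDomainRingHom ℤ φ) (Δ H) n] at h2
  exact Ideal.pow_right_mono h1 n h2

def ΔGens (H : Type*) [CommGroup H] : Set (MonoidAlgebra ℤ H) :=
  {x | ∃ g : H, MonoidAlgebra.of ℤ H g - 1 = x}

lemma of_sub_one_mem' (G : Type*) [Group G] (g : G) :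
    MonoidAlgebra.of ℤ G g - 1 ∈ Δ G := by
  simp [Δ, RingHom.mem_ker, aug_single'']

lemma key_aux (H : Type*) [CommGroup H] (x : MonoidAlgebra ℤ H) :
    x - (aug H x) • (1 : MonoidAlgebra ℤ H) ∈ Ideal.span (ΔGens H) := by
  induction x using MonoidAlgebra.induction_linear with
  | zero => simp
  | add f g hf hg =>
      rw [map_add, add_smul]
      have h2 := add_mem hf hg
      convert h2 using 1
      exact add_sub_add_comm f g ((aug H) f • (1 : MonoidAlgebra ℤ H)) ((aug H) g • (1 : MonoidAlgebra ℤ H))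
  | single g c =>
      have h2 := Ideal.mul_mem_left (Ideal.span (ΔGens H))
        (algebraMap ℤ (MonoidAlgebra ℤ H) c)
        (Ideal.subset_span (s := ΔGens H) ⟨g, rfl⟩)
      rw [aug_single'']
      convert h2 using 1
      rw [Algebra.smul_def, mul_sub, mul_one]
      congr 1
      rw [← Algebra.smul_def, MonoidAlgebra.of_apply, MonoidAlgebra.smul_single', mul_one]

lemma Δ_eq_span (H : Type*) [CommGroup H] : Δ H = Ideal.span (ΔGens H) := by
  apply le_antisymm
  · intro a ha
    have h0 : aug H a = 0 := (mem_Δ_iff a).1 ha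
    have h1 := key_aux H a
    rwa [h0, zero_smul, sub_zero] at h1
  · rw [Ideal.span_le]
    rintro x ⟨g, rfl⟩
    exact of_sub_one_mem' H g

lemma Δ_pow_eq_span (H : Type*) [CommGroup H] (n : ℕ) :
    Δ H ^ n = Ideal.span ((ΔGens H) ^ n : Set (MonoidAlgebra ℤ H)) := by
  rw [Δ_eq_span]
  exact Submodule.span_pow _ n

lemma exists_preimage {K : Type*} [CommGroup K] (G₀ : Subgroup K) (x : MonoidAlgebra ℤ K)
    (hx : (x.coeff.support : Set K) ⊆ (G₀ : Set K)) :
    ∃ y : MonoidAlgebra ℤ ↥G₀, MonoidAlgebra.mapDomainRingHom ℤ G₀.subtype y = x := by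
  refine ⟨MonoidAlgebra.comapDomain _ (Subtype.val_injective (p := fun g => g ∈ G₀)) x, ?_⟩
  show MonoidAlgebra.mapDomain _ _ = x
  refine MonoidAlgebra.mapDomain_comapDomain ?_ Subtype.val_injective
  rwa [Subtype.range_coe_subtype]

lemma map_inclusion_comm {K : Type*} [CommGroup K] {G₀ G₁ : Subgroup K} (h : G₀ ≤ G₁)
    (w : MonoidAlgebra ℤ ↥G₀) :
    MonoidAlgebra.mapDomainRingHom ℤ G₁.subtype
      (MonoidAlgebra.mapDomainRingHom ℤ (Subgroup.inclusion h) w)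
      = MonoidAlgebra.mapDomainRingHom ℤ G₀.subtype w := by
  apply MonoidAlgebra.coeff_injective
  show Finsupp.mapDomain _ (Finsupp.mapDomain _ w.coeff) = Finsupp.mapDomain _ w.coeff
  rw [← Finsupp.mapDomain_comp]
  rfl

lemma map_of_sub_one {K : Type*} [CommGroup K] (G₀ : Subgroup K) (x : ↥G₀) :
    MonoidAlgebra.mapDomainRingHom ℤ G₀.subtype (MonoidAlgebra.of ℤ ↥G₀ x - 1)
      = MonoidAlgebra.of ℤ K ↑x - 1 := by
  rw [map_sub, map_one]
  congr 1
  show MonoidAlgebra.mapDomain _ (MonoidAlgebra.single x 1) = _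
  rw [MonoidAlgebra.mapDomain_single]
  rfl

lemma prods_case {K : Type*} [CommGroup K] :
    ∀ (n : ℕ) (x : MonoidAlgebra ℤ K), x ∈ (ΔGens K) ^ n →
    ∃ (s : Set K), s.Finite ∧
    ∃ (w : MonoidAlgebra ℤ ↥(Subgroup.closure s)),
      w ∈ Δ ↥(Subgroup.closure s) ^ n ∧
      MonoidAlgebra.mapDomainRingHom ℤ (Subgroup.closure s).subtype w = x := by
  intro n
  induction n with
  | zero =>
      intro x hx
      rw [pow_zero, Set.mem_one] at hx
      subst hx
      exact ⟨∅, Set.finite_empty, 1, by rw [pow_zero, Ideal.one_eq_top]; trivial, map_one _⟩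
  | succ n ih =>
      intro x hx
      rw [pow_succ] at hx
      rcases Set.mem_mul.1 hx with ⟨b, hb, a, ha, rfl⟩
      rcases ha with ⟨g, rfl⟩
      rcases ih b hb with ⟨s, hfin, w, hw, hmap⟩
      have hsub : Subgroup.closure s ≤ Subgroup.closure (insert g s) :=
        Subgroup.closure_mono (Set.subset_insert g s)
      have hg : g ∈ Subgroup.closure (insert g s) :=
        Subgroup.subset_closure (Set.mem_insert g s)
      refine ⟨insert g s, hfin.insert g,
        MonoidAlgebra.mapDomainRingHom ℤ (Subgroup.inclusion hsub) w
          * (MonoidAlgebra.of ℤ ↥(Subgroup.closure (insert g s)) ⟨g, hg⟩ - 1), ?_, ?_⟩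
      · rw [pow_succ]
        exact Ideal.mul_mem_mul (Δ_pow_map _ hw) (of_sub_one_mem' _ _)
      · rw [map_mul, map_inclusion_comm, hmap, map_of_sub_one]

lemma mem_pow_exists_fg {K : Type*} [CommGroup K] {n : ℕ} {v : MonoidAlgebra ℤ K}
    (hv : v ∈ Δ K ^ n) :
    ∃ (s : Set K), s.Finite ∧
    ∃ (w : MonoidAlgebra ℤ ↥(Subgroup.closure s)),
      w ∈ Δ ↥(Subgroup.closure s) ^ n ∧
      MonoidAlgebra.mapDomainRingHom ℤ (Subgroup.closure s).subtype w = v := by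
  rw [Δ_pow_eq_span] at hv
  refine Submodule.span_induction (fun x hx => prods_case n x hx) ?_ ?_ ?_ hv
  · exact ⟨∅, Set.finite_empty, 0, Submodule.zero_mem _, map_zero _⟩
  · rintro x y _ _ ⟨s, hsf, w, hw, hm⟩ ⟨t, htf, z, hz, hm'⟩
    have h1 : Subgroup.closure s ≤ Subgroup.closure (s ∪ t) :=
      Subgroup.closure_mono Set.subset_union_left
    have h2 : Subgroup.closure t ≤ Subgroup.closure (s ∪ t) :=
      Subgroup.closure_mono Set.subset_union_right
    refine ⟨s ∪ t, hsf.union htf,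
      MonoidAlgebra.mapDomainRingHom ℤ (Subgroup.inclusion h1) w
        + MonoidAlgebra.mapDomainRingHom ℤ (Subgroup.inclusion h2) z, ?_, ?_⟩
    · exact add_mem (Δ_pow_map _ hw) (Δ_pow_map _ hz)
    · rw [map_add, map_inclusion_comm, map_inclusion_comm, hm, hm']
  · rintro r x _ ⟨s, hsf, w, hw, hm⟩
    have h1 : Subgroup.closure s ≤ Subgroup.closure (s ∪ ↑r.coeff.support) :=
      Subgroup.closure_mono Set.subset_union_left
    obtain ⟨r', hr'⟩ := exists_preimage (Subgroup.closure (s ∪ ↑r.coeff.support)) r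
      (fun a ha => Subgroup.subset_closure (Set.mem_union_right s ha))
    refine ⟨s ∪ ↑r.coeff.support, hsf.union r.coeff.support.finite_toSet,
      r' * MonoidAlgebra.mapDomainRingHom ℤ (Subgroup.inclusion h1) w, ?_, ?_⟩
    · exact Ideal.mul_mem_left _ _ (Δ_pow_map _ hw)
    · rw [map_mul, hr', map_inclusion_comm, hm, smul_eq_mul]

lemma exists_retraction {G : Type*} [CommGroup G] (G₀ : Subgroup G) (hfg : Group.FG ↥G₀) :
    ∃ ρ : ↥G₀ →* ↥(CommGroup.torsion G),
      ∀ x : ↥G₀, (x : G) ∈ CommGroup.torsion G → ((ρ x : ↥(CommGroup.torsion G)) : G) = x := by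
  classical
  set T₀ := CommGroup.torsion ↥G₀ with hT₀
  let Q := ↥G₀ ⧸ T₀
  have htf : ∀ a : Q, a ≠ 1 → ¬ IsOfFinOrder a := fun a ha =>
    isMulTorsionFree_iff_not_isOfFinOrder.mp (QuotientGroup.instIsMulTorsionFree ↥G₀) ha
  have fgQ : Group.FG Q := Group.fg_of_surjective (QuotientGroup.mk'_surjective T₀)
  haveI : Module.Finite ℤ (Additive Q) :=
    Module.Finite.iff_addGroup_fg.mpr (GroupFG.iff_add_fg.mp fgQ)
  haveI : NoZeroSMulDivisors ℤ (Additive Q) := by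
    refine ⟨fun {c x} h => ?_⟩
    by_contra hcon
    push_neg at hcon
    obtain ⟨hc, hx⟩ := hcon
    have h1 : (Additive.toMul x) ^ c = 1 := h
    have h2 : IsOfFinOrder (Additive.toMul x) := isOfFinOrder_iff_zpow_eq_one.mpr ⟨c, hc, h1⟩
    exact htf (Additive.toMul x) (fun h' => hx (by simpa using h')) h2
  let π : ↥G₀ →* Q := QuotientGroup.mk' T₀
  let πlin : Additive ↥G₀ →ₗ[ℤ] Additive Q := (MonoidHom.toAdditive π).toIntLinearMap
  have hsurj : Function.Surjective πlin := by
    intro q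
    obtain ⟨g, hg⟩ := QuotientGroup.mk'_surjective T₀ (Additive.toMul q)
    exact ⟨Additive.ofMul g, congrArg Additive.ofMul hg⟩
  obtain ⟨σ, hσ⟩ := Module.projective_lifting_property πlin LinearMap.id hsurj
  have hσ' : ∀ q : Q, π (Additive.toMul (σ (Additive.ofMul q))) = q := by
    intro q
    have := congrArg (fun f => f (Additive.ofMul q)) hσ
    exact congrArg Additive.toMul this
  -- the retraction candidate inside G₀
  let r : ↥G₀ → ↥G₀ := fun g => g * (Additive.toMul (σ (Additive.ofMul (π g))))⁻¹
  have hrtor : ∀ g : ↥G₀, IsOfFinOrder (r g) := by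
    intro g
    have h1 : π (r g) = 1 := by
      simp only [r, map_mul, map_inv]
      rw [hσ' (π g), mul_inv_cancel]
    have h2 : r g ∈ T₀ := (QuotientGroup.eq_one_iff (r g)).mp h1
    exact h2
  refine ⟨{
      toFun := fun g => ⟨(r g : G), (CommGroup.mem_torsion (G := G) _).mpr
        (MonoidHom.isOfFinOrder G₀.subtype (hrtor g))⟩
      map_one' := ?_
      map_mul' := ?_ }, ?_⟩
  · apply Subtype.ext
    show ((r 1 : ↥G₀) : G) = 1
    have : r 1 = 1 := by
      simp only [r, map_one]
      rw [show Additive.ofMul (1 : Q) = 0 from rfl, map_zero]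
      simp
    rw [this]; rfl
  · intro g h
    apply Subtype.ext
    show ((r (g * h) : ↥G₀) : G) = ((r g : ↥G₀) : G) * ((r h : ↥G₀) : G)
    have : r (g * h) = r g * r h := by
      simp only [r, map_mul]
      rw [show Additive.ofMul (π g * π h) = Additive.ofMul (π g) + Additive.ofMul (π h) from rfl,
        map_add]
      rw [show Additive.toMul (σ (Additive.ofMul (π g)) + σ (Additive.ofMul (π h)))
        = Additive.toMul (σ (Additive.ofMul (π g))) * Additive.toMul (σ (Additive.ofMul (π h)))
        from rfl]
      rw [mul_inv]
      exact mul_mul_mul_comm _ _ _ _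
    rw [this]; rfl
  · intro x hx
    show ((r x : ↥G₀) : G) = (x : G)
    have hxt : IsOfFinOrder x := by
      obtain ⟨m, hm, hm'⟩ := isOfFinOrder_iff_pow_eq_one.mp ((CommGroup.mem_torsion (G := G) _).mp hx)
      exact isOfFinOrder_iff_pow_eq_one.mpr ⟨m, hm, Subtype.ext (by simpa using hm')⟩
    have h1 : π x = 1 := (QuotientGroup.eq_one_iff x).mpr hxt
    have : r x = x := by
      simp only [r, h1]
      rw [show Additive.ofMul (1 : Q) = 0 from rfl, map_zero]
      simp
    rw [this]

lemma map_mem_pow_iff {G : Type*} [CommGroup G] {n : ℕ}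
    (v : MonoidAlgebra ℤ ↥(CommGroup.torsion G))
    (hv : MonoidAlgebra.mapDomainRingHom ℤ (CommGroup.torsion G).subtype v ∈ Δ G ^ n) :
    v ∈ Δ ↥(CommGroup.torsion G) ^ n := by
  classical
  obtain ⟨s, hsf, w, hw, hmap⟩ := mem_pow_exists_fg hv
  haveI : Finite ↥s := hsf.to_subtype
  have hfg : Group.FG ↥(Subgroup.closure s) := Group.closure_finite_fg s
  obtain ⟨ρ, hρ⟩ := exists_retraction (Subgroup.closure s) hfg
  have hmap' : MonoidAlgebra.mapDomain ((Subgroup.closure s).subtype : ↥(Subgroup.closure s) → G) w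
      = MonoidAlgebra.mapDomain ((CommGroup.torsion G).subtype : ↥(CommGroup.torsion G) → G) v := hmap
  have hc : Finsupp.mapDomain ((Subgroup.closure s).subtype : ↥(Subgroup.closure s) → G) w.coeff
      = Finsupp.mapDomain ((CommGroup.torsion G).subtype : ↥(CommGroup.torsion G) → G) v.coeff :=
    congrArg MonoidAlgebra.coeff hmap'
  have hsupp : ∀ g ∈ w.coeff.support, ((g : ↥(Subgroup.closure s)) : G) ∈ CommGroup.torsion G := by
    intro g hg
    have h1 : (g : G) ∈ (Finsupp.mapDomain ((Subgroup.closure s).subtype :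
        ↥(Subgroup.closure s) → G) w.coeff).support := by
      rw [Finsupp.mapDomain_support_of_injective (show Function.Injective
        (⇑(Subgroup.closure s).subtype : ↥(Subgroup.closure s) → G) from Subtype.val_injective) w.coeff]
      exact Finset.mem_image_of_mem _ hg
    rw [hc] at h1
    have h3 := Finsupp.mapDomain_support h1
    obtain ⟨t, _, ht⟩ := Finset.mem_image.1 h3
    rw [← ht]
    exact t.2
  have hw' : MonoidAlgebra.mapDomainRingHom ℤ ρ w ∈ Δ ↥(CommGroup.torsion G) ^ n :=
    Δ_pow_map ρ hw
  have hinj : Function.Injective (MonoidAlgebra.mapDomain (R := ℤ)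
      ((CommGroup.torsion G).subtype : ↥(CommGroup.torsion G) → G)) :=
    MonoidAlgebra.mapDomain_injective Subtype.val_injective
  have heq : MonoidAlgebra.mapDomain ((CommGroup.torsion G).subtype : ↥(CommGroup.torsion G) → G)
        (MonoidAlgebra.mapDomain (ρ : ↥(Subgroup.closure s) → ↥(CommGroup.torsion G)) w)
      = MonoidAlgebra.mapDomain ((CommGroup.torsion G).subtype : ↥(CommGroup.torsion G) → G) v := by
    apply MonoidAlgebra.coeff_injective
    show Finsupp.mapDomain _ (Finsupp.mapDomain _ w.coeff) = Finsupp.mapDomain _ v.coeff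
    rw [← Finsupp.mapDomain_comp]
    have hcongr : Finsupp.mapDomain (((CommGroup.torsion G).subtype :
          ↥(CommGroup.torsion G) → G) ∘ (ρ : ↥(Subgroup.closure s) → ↥(CommGroup.torsion G))) w.coeff
        = Finsupp.mapDomain ((Subgroup.closure s).subtype : ↥(Subgroup.closure s) → G) w.coeff :=
      Finsupp.mapDomain_congr (fun g hg => hρ g (hsupp g hg))
    rw [hcongr]
    exact hc
  have hveq : MonoidAlgebra.mapDomain (ρ : ↥(Subgroup.closure s) → ↥(CommGroup.torsion G)) w = v :=
    hinj heq
  rwa [show MonoidAlgebra.mapDomainRingHom ℤ ρ w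
      = MonoidAlgebra.mapDomain (ρ : ↥(Subgroup.closure s) → ↥(CommGroup.torsion G)) w from rfl,
    hveq] at hw'

lemma mem_V_iff {H : Type*} [Group H] (u : (MonoidAlgebra ℤ H)ˣ) :
    u ∈ V H ↔ aug H ↑u = 1 := by
  rw [V, MonoidHom.mem_ker, Units.ext_iff]
  simp

lemma map_mem_V {G : Type*} [CommGroup G] (u : (MonoidAlgebra ℤ ↥(CommGroup.torsion G))ˣ)
    (hu : u ∈ V ↥(CommGroup.torsion G)) :
    Units.map (MonoidAlgebra.mapDomainRingHom ℤ
      (CommGroup.torsion G).subtype).toMonoidHom u ∈ V G := by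
  rw [mem_V_iff] at hu ⊢
  rw [Units.coe_map]
  show aug G (MonoidAlgebra.mapDomainRingHom ℤ (CommGroup.torsion G).subtype ↑u) = 1
  rw [aug_mapDomain]
  exact hu

lemma map_val_sub_one {G : Type*} [CommGroup G] (u : (MonoidAlgebra ℤ ↥(CommGroup.torsion G))ˣ) :
    ((Units.map (MonoidAlgebra.mapDomainRingHom ℤ
        (CommGroup.torsion G).subtype).toMonoidHom u : (MonoidAlgebra ℤ G)ˣ) :
        MonoidAlgebra ℤ G) - 1
      = MonoidAlgebra.mapDomainRingHom ℤ (CommGroup.torsion G).subtype ((u : _) - 1) := by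
  rw [map_sub, map_one, Units.coe_map]
  rfl

theorem stmt14 (G : Type*) [CommGroup G] :
    (∀ n : ℕ, 1 ≤ n → ∀ u : (MonoidAlgebra ℤ ↥(CommGroup.torsion G))ˣ,
      u ∈ V ↥(CommGroup.torsion G) →
        (Units.map (MonoidAlgebra.mapDomainRingHom ℤ
            (CommGroup.torsion G).subtype).toMonoidHom u ∈ Vn G n ↔
          u ∈ Vn ↥(CommGroup.torsion G) n)) ∧
    (∀ u : (MonoidAlgebra ℤ ↥(CommGroup.torsion G))ˣ,
      u ∈ V ↥(CommGroup.torsion G) →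
        (Units.map (MonoidAlgebra.mapDomainRingHom ℤ
            (CommGroup.torsion G).subtype).toMonoidHom u ∈ Vω G ↔
          u ∈ Vω ↥(CommGroup.torsion G))) := by
  have part1 : ∀ n : ℕ, 1 ≤ n → ∀ u : (MonoidAlgebra ℤ ↥(CommGroup.torsion G))ˣ,
      u ∈ V ↥(CommGroup.torsion G) →
        (Units.map (MonoidAlgebra.mapDomainRingHom ℤ
            (CommGroup.torsion G).subtype).toMonoidHom u ∈ Vn G n ↔
          u ∈ Vn ↥(CommGroup.torsion G) n) := by
    intro n hn u hu
    constructor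
    · rintro ⟨hV, hΔ⟩
      refine ⟨hu, map_mem_pow_iff _ ?_⟩
      rwa [map_val_sub_one] at hΔ
    · rintro ⟨hV, hΔ⟩
      refine ⟨map_mem_V u hu, ?_⟩
      rw [map_val_sub_one]
      exact Δ_pow_map _ hΔ
  refine ⟨part1, ?_⟩
  intro u hu
  constructor
  · intro h
    rw [Vω, Subgroup.mem_iInf] at h ⊢
    intro n
    exact (part1 (n + 1) (Nat.le_add_left 1 n) u hu).mp (h n)
  · intro h
    rw [Vω, Subgroup.mem_iInf] at h ⊢
    intro n
    exact (part1 (n + 1) (Nat.le_add_left 1 n) u hu).mpr (h n)
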